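/- arXiv:math/0209178 — 2 statements merged into one kernel-verified Lean document; each statement's English description precedes it below -/
import Mathlib

section
/- Let G = G(Q^n,p) be a random subgraph of the n-cube and let k ≥ 1 be a fixed integer. If p = p(n) = Θ(2^{-n/k}·n^{-1}), then 2^n · C(n,k) · p^k · (1−p)^{n−k} = Θ(1), the quantity κ(n) = max{ j : 2^n · C(n,j) · p^j · (1−p)^{n−j} ≥ 1 } equals k−1 or k, and almost surely the maximum degree Δ(G) is either k−1 or k. -/
/-!
Write `θ = 2^(-n/k)`, so that `p = Θ(θ / n)` and `2^n θ^k = 1`. The expected number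
`2^n C(n,j) p^j (1-p)^(n-j)` of vertices of degree `j` is then `Θ(1)` for `j = k`, at least
of order `1/θ` for `j = k - 1`, and `O(θ)` for `j > k`; this pins down `κ(n)`.

For `Δ`, a union bound over vertices and `(k+1)`-sets of directions gives
`P(Δ > k) ≤ 2^n (np)^(k+1) = O(θ)`. For `Δ ≥ k - 1`, look at the `2^(n-1)` vertices of even
weight: they are pairwise non-adjacent, so their stars of edges are disjoint and the events
"`v` keeps exactly a prescribed set of `k - 1` of its edges" are independent, each of
probability `q = p^(k-1) (1-p)^(n-k+1)`. Hence
`P(Δ < k - 1) ≤ (1 - q)^(2^(n-1)) ≤ 1 / (2^(n-1) q)`, which is `O(n^(k-1) θ)`.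
-/

open MeasureTheory Filter Asymptotics

noncomputable section

/-- The `n`-dimensional cube graph `Q^n`: vertices are vectors in `{0,1}^n`,
two vertices adjacent iff they differ in exactly one coordinate. -/
def cubeGraph (n : ℕ) : SimpleGraph (Fin n → Bool) where
  Adj x y := hammingDist x y = 1
  symm := ⟨fun x y h => by show hammingDist y x = 1; rwa [hammingDist_comm]⟩
  loopless := ⟨fun x h => by simp [hammingDist_self] at h⟩

/-- The subgraph of the `n`-cube determined by a configuration `ω` of edge indicators:
an edge of `Q^n` is kept iff its indicator is `true`. -/
def randCube (n : ℕ) (ω : Sym2 (Fin n → Bool) → Bool) : SimpleGraph (Fin n → Bool) where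
  Adj x y := (cubeGraph n).Adj x y ∧ ω s(x, y) = true
  symm := ⟨fun x y h => ⟨(cubeGraph n).adj_symm h.1, by rw [Sym2.eq_swap]; exact h.2⟩⟩
  loopless := ⟨fun x h => (cubeGraph n).loopless.irrefl x h.1⟩

/-- The product Bernoulli(p) measure on edge-indicator configurations: each potential
edge appears independently with probability `p`. -/
def cubeMeasure (n : ℕ) (p : ℝ) : Measure (Sym2 (Fin n → Bool) → Bool) :=
  Measure.pi fun _ => (PMF.bernoulli (min (Real.toNNReal p) 1) (min_le_right _ _)).toMeasure

/-- Degree of a vertex. -/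
def deg {V : Type*} [Fintype V] (G : SimpleGraph V) (v : V) : ℕ := (G.neighborSet v).ncard

/-- Maximum degree. -/
def maxDeg {V : Type*} [Fintype V] (G : SimpleGraph V) : ℕ := ⨆ v, deg G v

/-- Adjacency matrix over ℝ. -/
def adjMat {V : Type*} [Fintype V] (G : SimpleGraph V) : Matrix V V ℝ :=
  @SimpleGraph.adjMatrix ℝ V G (Classical.decRel _) _ _

theorem adjMat_isHermitian {V : Type*} [Fintype V] (G : SimpleGraph V) :
    (adjMat G).IsHermitian := by
  apply Matrix.ext
  intro i j
  simp only [adjMat, Matrix.conjTranspose_apply, SimpleGraph.adjMatrix_apply, star_trivial]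
  by_cases h : G.Adj i j
  · rw [if_pos h, if_pos (G.adj_symm h)]
  · rw [if_neg h, if_neg (fun hji => h (G.adj_symm hji))]

/-- The largest eigenvalue of the adjacency matrix of `G`. -/
def lambda1 {V : Type*} [Fintype V] [DecidableEq V] (G : SimpleGraph V) : ℝ :=
  ⨆ v, (adjMat_isHermitian G).eigenvalues v

/-- `κ(n) = max { k : 2^n C(n,k) p^k (1-p)^{n-k} ≥ 1 }`. -/
def kappa (n : ℕ) (p : ℝ) : ℕ :=
  sSup {k : ℕ | 1 ≤ (2 : ℝ) ^ n * n.choose k * p ^ k * (1 - p) ^ (n - k)}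

open ProbabilityTheory Finset Topology

section ProductMeasure

variable {ι Ω : Type*} [MeasurableSpace Ω] (μ : Measure Ω) [IsProbabilityMeasure μ]

theorem infinitePi_preimage_precomp {κ : Type*} {g : κ → ι} (hg : Function.Injective g)
    {s : Set (κ → Ω)} (hs : MeasurableSet s) :
    Measure.infinitePi (fun _ : ι => μ) {ω | (fun k => ω (g k)) ∈ s} =
      Measure.infinitePi (fun _ : κ => μ) s := by
  rw [← Measure.map_infinitePi_infinitePi_of_inj (P := fun _ : ι => μ) hg,
    Measure.map_apply (by fun_prop) hs]
  rfl

theorem infinitePi_forall_blocks {β κ : Type*} [Fintype β] {g : β × κ → ι}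
    (hg : Function.Injective g) {s : β → Set (κ → Ω)} (hs : ∀ b, MeasurableSet (s b)) :
    Measure.infinitePi (fun _ : ι => μ) {ω | ∀ b, (fun k => ω (g (b, k))) ∈ s b} =
      ∏ b, Measure.infinitePi (fun _ : κ => μ) (s b) := by
  have hbox : MeasurableSet ((↑(univ : Finset β) : Set β).pi s) := by
    simpa using MeasurableSet.univ_pi hs
  rw [← Measure.infinitePi_pi _ (fun b _ => hs b), ← Measure.infinitePi_map_curry (fun _ _ => μ),
    Measure.map_apply (MeasurableEquiv.curry β κ Ω).measurable hbox,
    ← infinitePi_preimage_precomp μ hg ((MeasurableEquiv.curry β κ Ω).measurable hbox)]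
  congr 1
  ext ω
  simp only [MeasurableEquiv.curry, Set.mem_preimage, Set.mem_pi, SetLike.mem_coe, mem_univ,
    forall_const, Set.mem_ofPred_eq]
  rfl

end ProductMeasure

theorem tendsto_measure_one_of_tendsto_compl {Ω : ℕ → Type*} [∀ n, MeasurableSpace (Ω n)]
    {μ : ∀ n, Measure (Ω n)} [∀ n, IsProbabilityMeasure (μ n)] {S : ∀ n, Set (Ω n)}
    (h : Tendsto (fun n => μ n (S n)ᶜ) atTop (𝓝 0)) :
    Tendsto (fun n => μ n (S n)) atTop (𝓝 1) := by
  have hlow : Tendsto (fun n => 1 - μ n (S n)ᶜ) atTop (𝓝 1) := by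
    simpa using ENNReal.Tendsto.sub tendsto_const_nhds h (Or.inl ENNReal.one_ne_top)
  refine tendsto_of_tendsto_of_tendsto_of_le_of_le hlow tendsto_const_nhds (fun n => ?_)
    fun n => prob_le_one
  rw [tsub_le_iff_right, ← measure_univ (μ := μ n), ← Set.union_compl_self (S n)]
  exact measure_union_le _ _

namespace Hypercube

variable {ι : Type*}

section Toggle

variable [DecidableEq ι]

def toggle (x : ι → Bool) (i : ι) : ι → Bool := Function.update x i (!x i)

theorem toggle_apply_self (x : ι → Bool) (i : ι) : toggle x i i = !x i := by
  simp [toggle]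

theorem toggle_apply_of_ne (x : ι → Bool) {i j : ι} (h : j ≠ i) : toggle x i j = x j :=
  Function.update_of_ne h _ _

theorem toggle_toggle (x : ι → Bool) (i : ι) : toggle (toggle x i) i = x := by
  simp [toggle]

theorem toggle_injective (x : ι → Bool) : Function.Injective (toggle x) := by
  intro i j h
  by_contra hij
  simpa [toggle_apply_self, toggle_apply_of_ne x hij] using congrFun h i

theorem toggle_ne (x : ι → Bool) (i : ι) : toggle x i ≠ x := fun h => by
  simpa [toggle_apply_self] using congrFun h i

theorem hammingDist_eq_one_iff [Fintype ι] {x y : ι → Bool} :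
    hammingDist x y = 1 ↔ ∃ i, y = toggle x i := by
  rw [hammingDist, card_eq_one]
  refine exists_congr fun i => ⟨fun hi => funext fun j => ?_, fun hy => Finset.ext fun j => ?_⟩
  · have hj := Finset.ext_iff.1 hi j
    simp only [mem_filter, mem_univ, true_and, mem_singleton] at hj
    by_cases hji : j = i
    · subst hji
      rw [toggle_apply_self]
      revert hj
      cases x j <;> cases y j <;> simp
    · rw [toggle_apply_of_ne x hji]
      exact (not_not.1 (hj.not.2 hji)).symm
  · subst hy
    by_cases hji : j = i
    · simp [hji, toggle_apply_self]
    · simp [hji, toggle_apply_of_ne x hji]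

end Toggle

section Parity

variable [Fintype ι]

def parity (x : ι → Bool) : ZMod 2 := ∑ i, ((x i).toNat : ZMod 2)

theorem natCast_hammingDist (x y : ι → Bool) :
    (hammingDist x y : ZMod 2) = parity x + parity y := by
  rw [hammingDist, natCast_card_filter, parity, parity, ← sum_add_distrib]
  refine sum_congr rfl fun i _ => ?_
  cases x i <;> cases y i <;> decide

variable [DecidableEq ι]

theorem parity_toggle (x : ι → Bool) (i : ι) : parity (toggle x i) = parity x + 1 := by
  have h := natCast_hammingDist x (toggle x i)
  rw [hammingDist_eq_one_iff.2 ⟨i, rfl⟩, Nat.cast_one] at h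
  generalize parity x = a at h
  generalize parity (toggle x i) = b at h
  revert a b
  decide

def evenVertices : Finset (ι → Bool) := {x | parity x = 0}

theorem hammingDist_ne_one_of_mem_evenVertices {x y : ι → Bool} (hx : x ∈ evenVertices)
    (hy : y ∈ evenVertices) : hammingDist x y ≠ 1 := by
  intro h
  have := natCast_hammingDist x y
  simp_all [evenVertices]

theorem two_mul_card_evenVertices [Nonempty ι] :
    2 * #(evenVertices : Finset (ι → Bool)) = 2 ^ Fintype.card ι := by
  have hZMod2 : ∀ a : ZMod 2, (a + 1 = 0 ↔ ¬a = 0) ∧ (¬a + 1 = 0 ↔ a = 0) := by decide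
  let i₀ : ι := Classical.arbitrary ι
  have hodd : #(evenVertices : Finset (ι → Bool)) = #({x | ¬parity x = 0} : Finset (ι → Bool)) :=
    card_nbij' (toggle · i₀) (toggle · i₀)
      (fun x hx => by simp_all [evenVertices, parity_toggle])
      (fun x hx => by simp_all [evenVertices, parity_toggle])
      (fun x _ => toggle_toggle x i₀) (fun x _ => toggle_toggle x i₀)
  have hsplit := card_filter_add_card_filter_not
    (s := (univ : Finset (ι → Bool))) (p := fun x => parity x = 0)
  rw [two_mul]
  nth_rw 2 [hodd]
  rw [evenVertices, hsplit, card_univ, Fintype.card_fun, Fintype.card_bool]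

theorem card_evenVertices [Nonempty ι] :
    #(evenVertices : Finset (ι → Bool)) = 2 ^ (Fintype.card ι - 1) := by
  have h := two_mul_card_evenVertices (ι := ι)
  rw [← Nat.succ_pred_eq_of_pos Fintype.card_pos, pow_succ'] at h
  exact Nat.eq_of_mul_eq_mul_left two_pos h

end Parity

section CubeEdges

variable [DecidableEq ι]

def cubeEdge (v : ι → Bool) (i : ι) : Sym2 (ι → Bool) := s(v, toggle v i)

theorem cubeEdge_injective (v : ι → Bool) : Function.Injective (cubeEdge v) := by
  intro i j h
  rcases Sym2.eq_iff.1 h with ⟨-, h⟩ | ⟨h, -⟩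
  · exact toggle_injective v h
  · exact absurd h.symm (toggle_ne v j)

theorem injective_cubeEdge_of_hammingDist_ne_one [Fintype ι] {F : Set (ι → Bool)}
    (hF : ∀ u ∈ F, ∀ v ∈ F, hammingDist u v ≠ 1) :
    Function.Injective fun q : F × ι => cubeEdge q.1.1 q.2 := by
  rintro ⟨u, i⟩ ⟨v, j⟩ h
  rcases Sym2.eq_iff.1 h with ⟨huv, h⟩ | ⟨hu, -⟩
  · obtain rfl : u = v := Subtype.ext huv
    exact congrArg _ (toggle_injective (u : ι → Bool) h)
  · exact absurd (hammingDist_eq_one_iff.2 ⟨j, hu⟩) (hF v v.2 u u.2)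

theorem randCube_adj_iff {n : ℕ} (ω : Sym2 (Fin n → Bool) → Bool) (v u : Fin n → Bool) :
    (randCube n ω).Adj v u ↔ ∃ i, u = toggle v i ∧ ω (cubeEdge v i) = true := by
  change hammingDist v u = 1 ∧ _ ↔ _
  rw [hammingDist_eq_one_iff]
  constructor
  · rintro ⟨⟨i, rfl⟩, h⟩
    exact ⟨i, rfl, h⟩
  · rintro ⟨i, rfl, h⟩
    exact ⟨⟨i, rfl⟩, h⟩

theorem deg_randCube {n : ℕ} (ω : Sym2 (Fin n → Bool) → Bool) (v : Fin n → Bool) :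
    deg (randCube n ω) v = #{i | ω (cubeEdge v i) = true} := by
  have h : (randCube n ω).neighborSet v = toggle v '' {i | ω (cubeEdge v i) = true} := by
    ext u
    rw [SimpleGraph.mem_neighborSet, randCube_adj_iff]
    constructor
    · rintro ⟨i, rfl, h⟩
      exact ⟨i, h, rfl⟩
    · rintro ⟨i, h, rfl⟩
      exact ⟨i, rfl, h⟩
  rw [deg, h, Set.ncard_image_of_injective _ (toggle_injective v), ← Set.ncard_coe_finset]
  simp

end CubeEdges

end Hypercube

open Hypercube

section MaxDegree

variable {V : Type*} [Fintype V] (G : SimpleGraph V)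

theorem deg_le_maxDeg (v : V) : deg G v ≤ maxDeg G :=
  le_ciSup (Set.finite_range _).bddAbove v

theorem exists_deg_eq_maxDeg [Nonempty V] : ∃ v, deg G v = maxDeg G :=
  exists_eq_ciSup_of_finite

end MaxDegree

section RandomCube

variable {n : ℕ} {p : ℝ}

theorem pow_mul_one_sub_pow_le_one (hp0 : 0 ≤ p) (hp1 : p ≤ 1) (a b : ℕ) :
    p ^ a * (1 - p) ^ b ≤ 1 :=
  mul_le_one₀ (pow_le_one₀ hp0 hp1) (pow_nonneg (by linarith) b)
    (pow_le_one₀ (by linarith) (by linarith))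

theorem prod_ite_mem_eq_pow_mul_pow (I : Finset (Fin n)) :
    (∏ i, if decide (i ∈ I) then p else 1 - p) = p ^ #I * (1 - p) ^ (n - #I) := by
  have hcompl : #{i | i ∉ I} = n - #I := by
    rw [filter_not, card_sdiff]
    simp
  simp [prod_ite, hcompl]

set_option linter.deprecated false in
abbrev edgeLaw (p : ℝ) : Measure Bool :=
  (PMF.bernoulli (min (Real.toNNReal p) 1) (min_le_right _ _)).toMeasure

theorem cubeMeasure_eq_infinitePi (n : ℕ) (p : ℝ) :
    cubeMeasure n p = Measure.infinitePi fun _ => edgeLaw p :=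
  (Measure.infinitePi_eq_pi _).symm

instance (n : ℕ) (p : ℝ) : IsProbabilityMeasure (cubeMeasure n p) := by
  rw [cubeMeasure_eq_infinitePi]
  infer_instance

set_option linter.deprecated false in
theorem edgeLaw_singleton (hp0 : 0 ≤ p) (hp1 : p ≤ 1) (b : Bool) :
    edgeLaw p {b} = ENNReal.ofReal (if b then p else 1 - p) := by
  rw [PMF.toMeasure_apply_singleton _ _ (measurableSet_singleton b), PMF.bernoulli_apply,
    min_eq_left (Real.toNNReal_le_one.2 hp1)]
  cases b
  · simp only [cond_false, ENNReal.coe_sub, ENNReal.coe_one]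
    rw [← ENNReal.ofReal, if_neg Bool.false_ne_true, ENNReal.ofReal_sub 1 hp0, ENNReal.ofReal_one]
  · rfl

theorem infinitePi_edgeLaw_singleton {ι : Type*} [Fintype ι] (hp0 : 0 ≤ p) (hp1 : p ≤ 1)
    (x : ι → Bool) :
    Measure.infinitePi (fun _ : ι => edgeLaw p) {x} =
      ENNReal.ofReal (∏ i, if x i then p else 1 - p) := by
  rw [Measure.infinitePi_singleton_of_fintype, ENNReal.ofReal_prod_of_nonneg]
  · exact prod_congr rfl fun i _ => edgeLaw_singleton hp0 hp1 (x i)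
  · intro i _
    split_ifs <;> linarith

theorem cubeMeasure_cubeEdges_present (hp0 : 0 ≤ p) (hp1 : p ≤ 1) (v : Fin n → Bool)
    (I : Finset (Fin n)) :
    cubeMeasure n p {ω | ∀ i ∈ I, ω (cubeEdge v i) = true} = ENNReal.ofReal p ^ #I := by
  have hI : {ω : Sym2 (Fin n → Bool) → Bool | ∀ i ∈ I, ω (cubeEdge v i) = true} =
      {ω | (fun i : I => ω (cubeEdge v i)) ∈ ({fun _ => true} : Set (I → Bool))} := by
    ext ω
    simp [funext_iff]
  rw [cubeMeasure_eq_infinitePi, hI,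
    infinitePi_preimage_precomp _ (g := fun i : I => cubeEdge v i)
      (fun _ _ h => Subtype.ext (cubeEdge_injective v h)) (measurableSet_singleton _),
    Measure.infinitePi_singleton_of_fintype]
  simp [edgeLaw_singleton hp0 hp1]

theorem cubeMeasure_le_maxDeg_le (hp0 : 0 ≤ p) (hp1 : p ≤ 1) (j : ℕ) :
    cubeMeasure n p {ω | j ≤ maxDeg (randCube n ω)} ≤
      ENNReal.ofReal (2 ^ n * n.choose j * p ^ j) := by
  have hcover : {ω | j ≤ maxDeg (randCube n ω)} ⊆ ⋃ v : Fin n → Bool,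
      ⋃ I ∈ powersetCard j (univ : Finset (Fin n)), {ω | ∀ i ∈ I, ω (cubeEdge v i) = true} := by
    intro ω hω
    obtain ⟨v, hv⟩ := exists_deg_eq_maxDeg (randCube n ω)
    rw [Set.mem_ofPred_eq, ← hv, deg_randCube] at hω
    obtain ⟨I, hIsub, hIcard⟩ := exists_subset_card_eq hω
    simp only [Set.mem_iUnion]
    exact ⟨v, I, mem_powersetCard.2 ⟨subset_univ I, hIcard⟩,
      fun i hi => (mem_filter.1 (hIsub hi)).2⟩
  calc cubeMeasure n p {ω | j ≤ maxDeg (randCube n ω)}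
      ≤ ∑ v : Fin n → Bool, ∑ I ∈ powersetCard j (univ : Finset (Fin n)),
          cubeMeasure n p {ω | ∀ i ∈ I, ω (cubeEdge v i) = true} :=
        (measure_mono hcover).trans <| (measure_iUnion_fintype_le _ _).trans <|
          sum_le_sum fun v _ => measure_biUnion_finset_le _ _
    _ = ∑ _v : Fin n → Bool, ∑ _I ∈ powersetCard j (univ : Finset (Fin n)),
          ENNReal.ofReal p ^ j :=
        sum_congr rfl fun v _ => sum_congr rfl fun I hI => by
          rw [cubeMeasure_cubeEdges_present hp0 hp1, (mem_powersetCard.1 hI).2]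
    _ = ENNReal.ofReal (2 ^ n * n.choose j * p ^ j) := by
        rw [ENNReal.ofReal_mul (by positivity), ENNReal.ofReal_mul (by positivity),
          ENNReal.ofReal_pow hp0, ENNReal.ofReal_pow zero_le_two, ENNReal.ofReal_natCast,
          ENNReal.ofReal_ofNat]
        simp [mul_assoc]

/- If `Δ < K`, no even vertex keeps exactly the edges in the directions of a fixed `K`-set `I`.
Even vertices are pairwise non-adjacent, so their stars of edges are disjoint and these events
are independent. -/
theorem cubeMeasure_maxDeg_lt_le (hp0 : 0 ≤ p) (hp1 : p ≤ 1) (hn : 0 < n) {K : ℕ}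
    (hK : K ≤ n) :
    cubeMeasure n p {ω | maxDeg (randCube n ω) < K} ≤
      ENNReal.ofReal ((1 - p ^ K * (1 - p) ^ (n - K)) ^ 2 ^ (n - 1)) := by
  obtain ⟨I, -, hI⟩ := exists_subset_card_eq (s := (univ : Finset (Fin n))) (by simpa using hK)
  let F : Set (Fin n → Bool) := ↑(evenVertices : Finset (Fin n → Bool))
  have hinj : Function.Injective fun q : F × Fin n => cubeEdge q.1.1 q.2 :=
    injective_cubeEdge_of_hammingDist_ne_one fun u hu v hv =>
      hammingDist_ne_one_of_mem_evenVertices hu hv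
  have hsub : {ω | maxDeg (randCube n ω) < K} ⊆
      {ω | ∀ v : F, (fun i => ω (cubeEdge v.1 i)) ∈ ({fun i => decide (i ∈ I)} : Set _)ᶜ} := by
    intro ω hω v hv
    have hdeg := deg_le_maxDeg (randCube n ω) v
    have hkept : ({i | ω (cubeEdge v.1 i) = true} : Finset (Fin n)) = I := by
      ext i
      simp [congrFun (Set.mem_singleton_iff.1 hv) i]
    rw [deg_randCube, hkept, hI] at hdeg
    exact absurd hω (not_lt.2 hdeg)
  have hcardF : Fintype.card F = 2 ^ (n - 1) := by
    have : Nonempty (Fin n) := ⟨⟨0, hn⟩⟩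
    simpa [F] using card_evenVertices (ι := Fin n)
  calc cubeMeasure n p {ω | maxDeg (randCube n ω) < K}
      ≤ Measure.infinitePi (fun _ => edgeLaw p)
          {ω | ∀ v : F, (fun i => ω (cubeEdge v.1 i)) ∈ ({fun i => decide (i ∈ I)} : Set _)ᶜ} := by
        rw [← cubeMeasure_eq_infinitePi]
        exact measure_mono hsub
    _ = ∏ _v : F, (1 - ENNReal.ofReal (p ^ K * (1 - p) ^ (n - K))) := by
        rw [infinitePi_forall_blocks _ hinj fun _ => (measurableSet_singleton _).compl]
        refine prod_congr rfl fun v _ => ?_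
        rw [prob_compl_eq_one_sub (measurableSet_singleton _),
          infinitePi_edgeLaw_singleton hp0 hp1, prod_ite_mem_eq_pow_mul_pow, hI]
    _ = ENNReal.ofReal ((1 - p ^ K * (1 - p) ^ (n - K)) ^ 2 ^ (n - 1)) := by
        rw [prod_const, card_univ, hcardF, ← ENNReal.ofReal_one,
          ← ENNReal.ofReal_sub _ (by positivity), ← ENNReal.ofReal_pow]
        linarith [pow_mul_one_sub_pow_le_one hp0 hp1 K (n - K)]

end RandomCube

def expectedDegCount (n j : ℕ) (p : ℝ) : ℝ := 2 ^ n * n.choose j * p ^ j * (1 - p) ^ (n - j)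

section Estimates

variable {n j : ℕ} {p : ℝ}

theorem half_le_one_sub_pow {m : ℕ} (hp0 : 0 ≤ p) (hp1 : p ≤ 1) (hnp : n * p ≤ 1 / 2)
    (hm : m ≤ n) : 1 / 2 ≤ (1 - p) ^ m := by
  have hmp : (m : ℝ) * p ≤ n * p := by gcongr
  calc (1 : ℝ) / 2 ≤ 1 + m * -p := by nlinarith
    _ ≤ (1 - p) ^ m := by
        rw [sub_eq_add_neg]
        exact one_add_mul_le_pow (by linarith) m

theorem choose_mul_pow_le (hp0 : 0 ≤ p) : (n.choose j : ℝ) * p ^ j ≤ (n * p) ^ j := by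
  rw [mul_pow]
  gcongr
  exact_mod_cast Nat.choose_le_pow n j

theorem expectedDegCount_le (hp0 : 0 ≤ p) (hp1 : p ≤ 1) :
    expectedDegCount n j p ≤ 2 ^ n * (n * p) ^ j :=
  calc expectedDegCount n j p ≤ 2 ^ n * (n.choose j * p ^ j) * 1 := by
        rw [expectedDegCount, ← mul_assoc]
        gcongr
        exact pow_le_one₀ (by linarith) (by linarith)
    _ ≤ 2 ^ n * (n * p) ^ j := by
        rw [mul_one]
        gcongr
        exact choose_mul_pow_le hp0

theorem le_expectedDegCount (hp0 : 0 ≤ p) (hp1 : p ≤ 1) (hnp : n * p ≤ 1 / 2)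
    (hj : 2 * j ≤ n) :
    2 ^ n * (n * p) ^ j / (2 ^ (j + 1) * j.factorial) ≤ expectedDegCount n j p := by
  have hchoose : ((n : ℝ) / 2) ^ j / j.factorial ≤ n.choose j := by
    refine le_trans ?_ (Nat.pow_le_choose j n)
    gcongr
    rw [Nat.cast_sub (by omega)]
    push_cast
    have : (2 * j : ℝ) ≤ n := by exact_mod_cast hj
    linarith
  calc 2 ^ n * (n * p) ^ j / (2 ^ (j + 1) * j.factorial)
      = 2 ^ n * (((n : ℝ) / 2) ^ j / j.factorial) * p ^ j * (1 / 2) := by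
        rw [div_pow]
        field_simp
        ring
    _ ≤ expectedDegCount n j p := by
        unfold expectedDegCount
        gcongr
        exact half_le_one_sub_pow hp0 hp1 hnp (Nat.sub_le n j)

theorem expectedDegCount_of_lt (hj : n < j) : expectedDegCount n j p = 0 := by
  simp [expectedDegCount, Nat.choose_eq_zero_of_lt hj]

theorem kappa_le {M : ℕ} (h : ∀ j, M < j → expectedDegCount n j p < 1) : kappa n p ≤ M :=
  csSup_le' fun j hj => not_lt.1 fun hMj => (h j hMj).not_ge hj

theorem le_kappa (h : 1 ≤ expectedDegCount n j p) : j ≤ kappa n p := by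
  refine le_csSup ⟨n, fun i (hi : 1 ≤ expectedDegCount n i p) => not_lt.1 fun hni => ?_⟩ h
  rw [expectedDegCount_of_lt hni] at hi
  exact absurd hi (by norm_num)

end Estimates

theorem one_sub_pow_le_inv {q : ℝ} (hq0 : 0 < q) (hq1 : q ≤ 1) {N : ℕ} (hN : 0 < N) :
    (1 - q) ^ N ≤ (N * q)⁻¹ := by
  have hNq : 0 < (N : ℝ) * q := by positivity
  calc (1 - q) ^ N = (1 - N * q / N) ^ N := by field_simp
    _ ≤ Real.exp (-(N * q)) := Real.one_sub_div_pow_le_exp_neg (by nlinarith)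
    _ ≤ (N * q)⁻¹ := by
        rw [Real.exp_neg]
        exact inv_anti₀ hNq (by linarith [Real.add_one_le_exp (N * q)])

section Regime

/- `θ` stands for `2^(-n/k)`: then `2^n θ^k = 1`, and `C₁ θ ≤ n p ≤ C₂ θ` is the hypothesis
`p = Θ(2^(-n/k) / n)`. -/
variable {k n : ℕ} {p θ C₁ C₂ : ℝ}

theorem two_pow_mul_pow_le_of_le_mul (hθ : 2 ^ n * θ ^ k = 1) (hp0 : 0 ≤ p) (hnp : n * p ≤ 1)
    (h₂ : n * p ≤ C₂ * θ) {j : ℕ} (hkj : k < j) : 2 ^ n * (n * p) ^ j ≤ C₂ ^ (k + 1) * θ :=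
  calc 2 ^ n * (n * p) ^ j ≤ 2 ^ n * (n * p) ^ (k + 1) :=
        mul_le_mul_of_nonneg_left (pow_le_pow_of_le_one (by positivity) hnp hkj) (by positivity)
    _ ≤ 2 ^ n * (C₂ * θ) ^ (k + 1) := by gcongr
    _ = C₂ ^ (k + 1) * θ := by linear_combination (C₂ ^ (k + 1) * θ) * hθ

theorem expectedDegCount_self_le (hθ : 2 ^ n * θ ^ k = 1) (hp0 : 0 ≤ p) (hp1 : p ≤ 1)
    (h₂ : n * p ≤ C₂ * θ) : expectedDegCount n k p ≤ C₂ ^ k :=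
  calc expectedDegCount n k p ≤ 2 ^ n * (n * p) ^ k := expectedDegCount_le hp0 hp1
    _ ≤ 2 ^ n * (C₂ * θ) ^ k := by gcongr
    _ = C₂ ^ k := by linear_combination C₂ ^ k * hθ

theorem pow_div_le_expectedDegCount (hp0 : 0 ≤ p) (hp1 : p ≤ 1) (hnp : n * p ≤ 1 / 2)
    (hθ0 : 0 ≤ θ) (hC₁ : 0 ≤ C₁) (h₁ : C₁ * θ ≤ n * p) {j : ℕ} (hj : 2 * j ≤ n) :
    2 ^ n * (C₁ * θ) ^ j / (2 ^ (j + 1) * j.factorial) ≤ expectedDegCount n j p :=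
  le_trans (by gcongr) (le_expectedDegCount hp0 hp1 hnp hj)

theorem le_expectedDegCount_self (hθ : 2 ^ n * θ ^ k = 1) (hp0 : 0 ≤ p) (hp1 : p ≤ 1)
    (hnp : n * p ≤ 1 / 2) (hθ0 : 0 ≤ θ) (hC₁ : 0 ≤ C₁) (h₁ : C₁ * θ ≤ n * p)
    (hkn : 2 * k ≤ n) :
    C₁ ^ k / (2 ^ (k + 1) * k.factorial) ≤ expectedDegCount n k p := by
  refine le_trans (le_of_eq ?_) (pow_div_le_expectedDegCount hp0 hp1 hnp hθ0 hC₁ h₁ hkn)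
  congr 1
  linear_combination (-C₁ ^ k) * hθ

theorem le_expectedDegCount_pred_mul (hk : 1 ≤ k) (hθ : 2 ^ n * θ ^ k = 1) (hp0 : 0 ≤ p)
    (hp1 : p ≤ 1) (hnp : n * p ≤ 1 / 2) (hθ0 : 0 ≤ θ) (hC₁ : 0 ≤ C₁) (h₁ : C₁ * θ ≤ n * p)
    (hkn : 2 * k ≤ n) :
    C₁ ^ (k - 1) / (2 ^ k * (k - 1).factorial) ≤ expectedDegCount n (k - 1) p * θ := by
  have h := pow_div_le_expectedDegCount hp0 hp1 hnp hθ0 hC₁ h₁ (j := k - 1) (by omega)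
  rw [Nat.sub_add_cancel hk] at h
  refine le_trans (le_of_eq ?_) (mul_le_mul_of_nonneg_right h hθ0)
  obtain ⟨m, rfl⟩ := Nat.exists_eq_add_of_le' hk
  simp only [Nat.add_sub_cancel] at hθ ⊢
  field_simp
  linear_combination (-C₁ ^ m) * hθ

theorem kappa_eq_pred_or_self (hk : 1 ≤ k) (hθ : 2 ^ n * θ ^ k = 1) (hp0 : 0 ≤ p)
    (hp1 : p ≤ 1) (hnp : n * p ≤ 1 / 2) (hθ0 : 0 < θ) (hC₁ : 0 ≤ C₁) (h₁ : C₁ * θ ≤ n * p)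
    (h₂ : n * p ≤ C₂ * θ) (hkn : 2 * k ≤ n)
    (hθC₁ : θ ≤ C₁ ^ (k - 1) / (2 ^ k * (k - 1).factorial)) (hθC₂ : C₂ ^ (k + 1) * θ < 1) :
    kappa n p = k - 1 ∨ kappa n p = k := by
  have hlow : k - 1 ≤ kappa n p := by
    refine le_kappa (le_of_mul_le_mul_right ?_ hθ0)
    rw [one_mul]
    exact hθC₁.trans (le_expectedDegCount_pred_mul hk hθ hp0 hp1 hnp hθ0.le hC₁ h₁ hkn)
  have hup : kappa n p ≤ k := kappa_le fun j hkj =>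
    ((expectedDegCount_le hp0 hp1).trans
      (two_pow_mul_pow_le_of_le_mul hθ hp0 (by linarith) h₂ hkj)).trans_lt hθC₂
  omega

theorem cubeMeasure_maxDeg_lt_pred_le (hk : 1 ≤ k) (hθ : 2 ^ n * θ ^ k = 1) (hp0 : 0 < p)
    (hp1 : p ≤ 1) (hnp : n * p ≤ 1 / 2) (hθ0 : 0 < θ) (hC₁ : 0 < C₁) (h₁ : C₁ * θ ≤ n * p)
    (hkn : k ≤ n) :
    cubeMeasure n p {ω | maxDeg (randCube n ω) < k - 1} ≤
      ENNReal.ofReal (4 / C₁ ^ (k - 1) * (n ^ (k - 1) * θ)) := by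
  have hn : 0 < n := by omega
  set q := p ^ (k - 1) * (1 - p) ^ (n - (k - 1)) with hq
  have hhalf := half_le_one_sub_pow hp0.le hp1 hnp (Nat.sub_le n (k - 1))
  have hq0 : 0 < q := mul_pos (pow_pos hp0 _) (by linarith)
  have hθk : θ ^ k = θ ^ (k - 1) * θ := by rw [← pow_succ, Nat.sub_add_cancel hk]
  have h2n : (2 : ℝ) ^ n = 2 * 2 ^ (n - 1) := by rw [← pow_succ', Nat.sub_add_cancel hn]
  have hNq : C₁ ^ (k - 1) ≤ (2 ^ (n - 1) : ℕ) * q * (4 * (n ^ (k - 1) * θ)) :=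
    calc C₁ ^ (k - 1) = 2 ^ n * (C₁ * θ) ^ (k - 1) * θ := by
          rw [hθk] at hθ
          linear_combination (-C₁ ^ (k - 1)) * hθ
      _ ≤ 2 ^ n * (n * p) ^ (k - 1) * θ := by gcongr
      _ = 2 ^ (n - 1) * (p ^ (k - 1) * (1 / 2)) * (4 * (n ^ (k - 1) * θ)) := by
          rw [h2n]
          ring
      _ ≤ (2 ^ (n - 1) : ℕ) * q * (4 * (n ^ (k - 1) * θ)) := by
          rw [hq]
          push_cast
          gcongr
  calc cubeMeasure n p {ω | maxDeg (randCube n ω) < k - 1}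
      ≤ ENNReal.ofReal ((1 - q) ^ 2 ^ (n - 1)) :=
        cubeMeasure_maxDeg_lt_le hp0.le hp1 hn (by omega)
    _ ≤ ENNReal.ofReal (4 / C₁ ^ (k - 1) * (n ^ (k - 1) * θ)) := by
        refine ENNReal.ofReal_le_ofReal <|
          (one_sub_pow_le_inv hq0 (pow_mul_one_sub_pow_le_one hp0.le hp1 _ _)
            (by positivity)).trans ?_
        rw [div_mul_eq_mul_div, le_div_iff₀ (by positivity), inv_mul_le_iff₀ (by positivity)]
        exact hNq

theorem cubeMeasure_compl_maxDeg_pred_or_self_le (hk : 1 ≤ k) (hθ : 2 ^ n * θ ^ k = 1)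
    (hp0 : 0 < p) (hp1 : p ≤ 1) (hnp : n * p ≤ 1 / 2) (hθ0 : 0 < θ) (hC₁ : 0 < C₁)
    (h₁ : C₁ * θ ≤ n * p) (h₂ : n * p ≤ C₂ * θ) (hkn : k ≤ n) :
    cubeMeasure n p {ω | maxDeg (randCube n ω) = k - 1 ∨ maxDeg (randCube n ω) = k}ᶜ ≤
      ENNReal.ofReal (C₂ ^ (k + 1) * θ) +
        ENNReal.ofReal (4 / C₁ ^ (k - 1) * (n ^ (k - 1) * θ)) := by
  have hcover : {ω | maxDeg (randCube n ω) = k - 1 ∨ maxDeg (randCube n ω) = k}ᶜ ⊆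
      {ω | k + 1 ≤ maxDeg (randCube n ω)} ∪ {ω | maxDeg (randCube n ω) < k - 1} := by
    intro ω hω
    simp only [Set.mem_compl_iff, Set.mem_ofPred_eq, Set.mem_union] at hω ⊢
    omega
  refine (measure_mono hcover).trans <| (measure_union_le _ _).trans <| add_le_add ?_ ?_
  · refine (cubeMeasure_le_maxDeg_le hp0.le hp1 (k + 1)).trans (ENNReal.ofReal_le_ofReal ?_)
    rw [mul_assoc]
    exact (mul_le_mul_of_nonneg_left (choose_mul_pow_le hp0.le) (by positivity)).trans
      (two_pow_mul_pow_le_of_le_mul hθ hp0.le (by linarith) h₂ (Nat.lt_succ_self k))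
  · exact cubeMeasure_maxDeg_lt_pred_le hk hθ hp0 hp1 hnp hθ0 hC₁ h₁ hkn

end Regime

section TwoRpow

variable {k : ℕ}

theorem two_pow_mul_two_rpow_pow (hk : k ≠ 0) (n : ℕ) :
    2 ^ n * ((2 : ℝ) ^ (-(n : ℝ) / k)) ^ k = 1 := by
  rw [← Real.rpow_natCast _ k, ← Real.rpow_mul zero_le_two,
    div_mul_cancel₀ _ (by exact_mod_cast hk), Real.rpow_neg zero_le_two, Real.rpow_natCast,
    mul_inv_cancel₀ (by positivity)]

theorem tendsto_pow_mul_two_rpow (hk : k ≠ 0) (m : ℕ) :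
    Tendsto (fun n : ℕ => (n : ℝ) ^ m * (2 : ℝ) ^ (-(n : ℝ) / k)) atTop (𝓝 0) := by
  have hr : 1 < (2 : ℝ) ^ (1 / k : ℝ) := Real.one_lt_rpow one_lt_two (by positivity)
  refine (tendsto_pow_const_div_const_pow_of_one_lt m hr).congr fun n => ?_
  rw [div_eq_mul_inv, ← Real.rpow_natCast _ n, ← Real.rpow_mul zero_le_two,
    ← Real.rpow_neg zero_le_two]
  congr 2
  ring

theorem tendsto_maxDeg_failure_bound (hk : k ≠ 0) (C₁ C₂ : ℝ) :
    Tendsto (fun n : ℕ => ENNReal.ofReal (C₂ ^ (k + 1) * (2 : ℝ) ^ (-(n : ℝ) / k)) +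
      ENNReal.ofReal (4 / C₁ ^ (k - 1) * (n ^ (k - 1) * (2 : ℝ) ^ (-(n : ℝ) / k))))
      atTop (𝓝 0) := by
  simpa using (ENNReal.tendsto_ofReal ((tendsto_pow_mul_two_rpow hk 0).const_mul _)).add
    (ENNReal.tendsto_ofReal ((tendsto_pow_mul_two_rpow hk (k - 1)).const_mul _))

theorem eventually_theta_regime (hk : 1 ≤ k) {p : ℕ → ℝ} {C₁ C₂ : ℝ} (hC₁ : 0 < C₁)
    (hev : ∀ᶠ n : ℕ in atTop,
      C₁ * ((2 : ℝ) ^ (-(n : ℝ) / (k : ℝ)) * (n : ℝ)⁻¹) ≤ p n ∧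
      p n ≤ C₂ * ((2 : ℝ) ^ (-(n : ℝ) / (k : ℝ)) * (n : ℝ)⁻¹)) :
    ∀ᶠ n : ℕ in atTop, 2 * k ≤ n ∧ n * p n ≤ 1 / 2 ∧
      C₁ * (2 : ℝ) ^ (-(n : ℝ) / k) ≤ n * p n ∧ n * p n ≤ C₂ * (2 : ℝ) ^ (-(n : ℝ) / k) ∧
      C₂ ^ (k + 1) * (2 : ℝ) ^ (-(n : ℝ) / k) < 1 ∧
      (2 : ℝ) ^ (-(n : ℝ) / k) ≤ C₁ ^ (k - 1) / (2 ^ k * (k - 1).factorial) := by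
  have hθ : ∀ C : ℝ, Tendsto (fun n : ℕ => C * (2 : ℝ) ^ (-(n : ℝ) / k)) atTop (𝓝 0) :=
    fun C => by simpa using (tendsto_pow_mul_two_rpow (by omega : k ≠ 0) 0).const_mul C
  have hc : (0 : ℝ) < C₁ ^ (k - 1) / (2 ^ k * (k - 1).factorial) := by positivity
  filter_upwards [hev, eventually_ge_atTop (2 * k),
    (hθ C₂).eventually (eventually_le_nhds one_half_pos),
    (hθ (C₂ ^ (k + 1))).eventually (eventually_lt_nhds one_pos),
    (hθ 1).eventually (eventually_le_nhds hc)] with n ⟨h₁, h₂⟩ hkn hhalf hθC₂ hθC₁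
  have hn : (0 : ℝ) < n := by exact_mod_cast (show 0 < n by omega)
  rw [← mul_assoc, ← div_eq_mul_inv, div_le_iff₀ hn] at h₁
  rw [← mul_assoc, ← div_eq_mul_inv, le_div_iff₀ hn] at h₂
  rw [one_mul] at hθC₁
  exact ⟨hkn, by linarith, by linarith, by linarith, hθC₂, hθC₁⟩

end TwoRpow

/-- if `p = Θ(2^{-n/k} n⁻¹)` for a fixed `k ≥ 1`, then
`2^n C(n,k) p^k (1-p)^{n-k} = Θ(1)`, `κ(n) ∈ {k-1, k}`, and a.s. `Δ(G) ∈ {k-1, k}`. -/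
theorem maxDegree_theta_case (k : ℕ) (hk : 1 ≤ k) (p : ℕ → ℝ)
    (hp : ∀ n, 0 < p n ∧ p n ≤ 1)
    (htheta : ∃ C₁ C₂ : ℝ, 0 < C₁ ∧ 0 < C₂ ∧ ∀ᶠ n : ℕ in atTop,
      C₁ * ((2 : ℝ) ^ (-(n : ℝ) / (k : ℝ)) * (n : ℝ)⁻¹) ≤ p n ∧
      p n ≤ C₂ * ((2 : ℝ) ^ (-(n : ℝ) / (k : ℝ)) * (n : ℝ)⁻¹)) :
    (∃ c₁ c₂ : ℝ, 0 < c₁ ∧ 0 < c₂ ∧ ∀ᶠ n : ℕ in atTop,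
      c₁ ≤ (2 : ℝ) ^ n * n.choose k * p n ^ k * (1 - p n) ^ (n - k) ∧
      (2 : ℝ) ^ n * n.choose k * p n ^ k * (1 - p n) ^ (n - k) ≤ c₂) ∧
    (∀ᶠ n : ℕ in atTop, kappa n (p n) = k - 1 ∨ kappa n (p n) = k) ∧
    Tendsto (fun n : ℕ =>
      cubeMeasure n (p n) {ω |
        maxDeg (randCube n ω) = k - 1 ∨ maxDeg (randCube n ω) = k})
      atTop (nhds 1) := by
  obtain ⟨C₁, C₂, hC₁, hC₂, hev⟩ := htheta
  have hk0 : k ≠ 0 := by omega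
  have hθ := two_pow_mul_two_rpow_pow hk0
  have hreg := eventually_theta_regime hk hC₁ hev
  refine ⟨⟨C₁ ^ k / (2 ^ (k + 1) * k.factorial), C₂ ^ k, by positivity, by positivity, ?_⟩, ?_, ?_⟩
  · filter_upwards [hreg] with n ⟨hkn, hnp, h₁, h₂, _, _⟩
    exact ⟨le_expectedDegCount_self (hθ n) (hp n).1.le (hp n).2 hnp (by positivity) hC₁.le h₁
      hkn, expectedDegCount_self_le (hθ n) (hp n).1.le (hp n).2 h₂⟩
  · filter_upwards [hreg] with n ⟨hkn, hnp, h₁, h₂, hθC₂, hθC₁⟩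
    exact kappa_eq_pred_or_self hk (hθ n) (hp n).1.le (hp n).2 hnp (by positivity) hC₁.le h₁ h₂
      hkn hθC₁ hθC₂
  · refine tendsto_measure_one_of_tendsto_compl <| tendsto_of_tendsto_of_tendsto_of_le_of_le'
      tendsto_const_nhds (tendsto_maxDeg_failure_bound hk0 C₁ C₂)
      (Eventually.of_forall fun n => zero_le) ?_
    filter_upwards [hreg] with n ⟨hkn, hnp, h₁, h₂, _, _⟩
    exact cubeMeasure_compl_maxDeg_pred_or_self_le hk (hθ n) (hp n).1 (hp n).2 hnp
      (by positivity) hC₁ h₁ h₂ (by omega)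
end
end

section
/- Let G = G(Q^n,p) be a random subgraph of the n-cube, and let a, b be positive constants with a + b > 1. Then for every 0 < p ≤ 1 with n^b ≥ 6·n·p, almost surely G contains no vertex v such that there are at least n^a vertices u at distance one or two from v in Q^n with degree d_G(u) ≥ n^b. -/
open MeasureTheory Filter Asymptotics

noncomputable section

/-! If some vertex `v` has `m = ⌈n^a⌉` vertices of degree at least `n^b` among its at most `n²`
vertices at distance one or two, then by double counting these vertices are incident to at least
`f = ⌈m n^b / 2⌉` present edges, all among the at most `m n` edges of `Q^n` incident to them.
A union bound over `v`, the `m` vertices and `f` of those edges bounds the probability by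
`2^n (n²)^m C(mn, f) p^f ≤ 2^n n^{2m} (e/3)^f`, because `6np ≤ n^b` gives `3 m n p ≤ f`.
The logarithm `n log 2 + O(n^a log n) - Ω(n^{a+b})` of this bound tends to `-∞` as `a + b > 1`
and `b > 0`. -/

open Finset

theorem SimpleGraph.sum_degree_le_two_mul_card_biUnion_incidenceFinset {V : Type*}
    [DecidableEq V] (G : SimpleGraph V) [G.LocallyFinite] (S : Finset V) :
    ∑ u ∈ S, G.degree u ≤ 2 * #(S.biUnion fun u => G.incidenceFinset u) := by
  set T := S.biUnion fun u => G.incidenceFinset u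
  calc ∑ u ∈ S, G.degree u ≤ ∑ u ∈ S, #(T.bipartiteAbove (· ∈ ·) u) := by
        refine sum_le_sum fun u hu => ?_
        rw [← G.card_incidenceFinset_eq_degree]
        refine card_le_card fun e he => mem_filter.2 ⟨mem_biUnion.2 ⟨u, hu, he⟩, ?_⟩
        exact ((G.mem_incidenceFinset u e).1 he).2
    _ = ∑ e ∈ T, #(S.bipartiteBelow (· ∈ ·) e) :=
        sum_card_bipartiteAbove_eq_sum_card_bipartiteBelow _
    _ ≤ ∑ _e ∈ T, 2 := by
        refine sum_le_sum fun e _ => ?_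
        calc #(S.bipartiteBelow (· ∈ ·) e) ≤ #e.toFinset :=
              card_le_card fun u hu => Sym2.mem_toFinset.2 (mem_filter.1 hu).2
          _ ≤ 2 := by rw [Sym2.card_toFinset]; split_ifs <;> omega
    _ = 2 * #T := by rw [sum_const, smul_eq_mul, mul_comm]

theorem deg_eq_degree {V : Type*} [Fintype V] (G : SimpleGraph V) (v : V)
    [Fintype (G.neighborSet v)] : deg G v = G.degree v := by
  rw [deg, Set.ncard_eq_toFinset_card']
  rfl

theorem card_filter_hammingDist_eq_le {n : ℕ} (v : Fin n → Bool) (k : ℕ) :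
    #{u | hammingDist u v = k} ≤ n.choose k := by
  have hinj : Set.InjOn (fun u : Fin n → Bool => ({i | u i ≠ v i} : Finset (Fin n))) ⊤ := by
    intro u _ w _ huw
    funext i
    have := congrArg (i ∈ ·) huw
    simp only [mem_filter, mem_univ, true_and, eq_iff_iff] at this
    revert this
    cases u i <;> cases w i <;> cases v i <;> simp
  simpa [hammingDist] using card_le_card_of_injOn _ (fun u hu => mem_powersetCard.2
    ⟨subset_univ _, (mem_filter.1 hu).2⟩) (hinj.mono (Set.subset_univ _))

def distOneOrTwo {n : ℕ} (v : Fin n → Bool) : Finset (Fin n → Bool) :=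
  {u | hammingDist u v = 1 ∨ hammingDist u v = 2}

theorem card_distOneOrTwo_le {n : ℕ} (v : Fin n → Bool) : #(distOneOrTwo v) ≤ n ^ 2 := by
  rw [distOneOrTwo, filter_or]
  calc _ ≤ n.choose 1 + n.choose 2 := (card_union_le _ _).trans
          (add_le_add (card_filter_hammingDist_eq_le v 1) (card_filter_hammingDist_eq_le v 2))
    _ ≤ n ^ 2 := by
        rw [Nat.choose_one_right, Nat.choose_two_right, sq]
        have := Nat.div_le_self (n * (n - 1)) 2
        have := Nat.mul_sub_one n n
        have := Nat.le_mul_self n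
        omega

open Classical in
theorem cubeGraph_degree_le (n : ℕ) (u : Fin n → Bool) : (cubeGraph n).degree u ≤ n := by
  rw [← SimpleGraph.card_neighborFinset_eq_degree]
  calc _ ≤ #{w | hammingDist w u = 1} := card_le_card fun w hw => mem_filter.2 ⟨mem_univ w,
          (hammingDist_comm w u).trans (((cubeGraph n).mem_neighborFinset u w).1 hw)⟩
    _ ≤ n := by simpa using card_filter_hammingDist_eq_le u 1

theorem randCube_le (n : ℕ) (ω : Sym2 (Fin n → Bool) → Bool) :
    randCube n ω ≤ cubeGraph n :=
  fun _ _ h => h.1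

theorem apply_eq_true_of_mem_edgeSet_randCube {n : ℕ} {ω : Sym2 (Fin n → Bool) → Bool}
    {e : Sym2 (Fin n → Bool)}    (he : e ∈ (randCube n ω).edgeSet) : ω e = true := by
  induction e using Sym2.ind with
  | h x y => exact he.2

def HasClusteredHighDegree (n : ℕ) (a b : ℝ) (ω : Sym2 (Fin n → Bool) → Bool) : Prop :=
  ∃ v : Fin n → Bool, (n : ℝ) ^ a ≤
    (({u | (hammingDist u v = 1 ∨ hammingDist u v = 2) ∧
        (n : ℝ) ^ b ≤ (deg (randCube n ω) u : ℝ)}.ncard : ℕ) : ℝ)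

open Classical in
theorem exists_present_edges_of_le_deg {n : ℕ} (ω : Sym2 (Fin n → Bool) → Bool)
    (S : Finset (Fin n → Bool)) {x : ℝ} (hS : ∀ u ∈ S, x ≤ deg (randCube n ω) u) :
    ∃ F ⊆ S.biUnion (fun u => (cubeGraph n).incidenceFinset u),
      #F = ⌈#S * x / 2⌉₊ ∧ ∀ e ∈ F, ω e = true := by
  set T := S.biUnion fun u => (randCube n ω).incidenceFinset u
  have hT : #S * x ≤ 2 * #T := by
    calc #S * x = ∑ _u ∈ S, x := by rw [sum_const, nsmul_eq_mul]
      _ ≤ ∑ u ∈ S, ((randCube n ω).degree u : ℝ) :=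
          sum_le_sum fun u hu => deg_eq_degree (randCube n ω) u ▸ hS u hu
      _ ≤ 2 * #T := by
          exact_mod_cast (randCube n ω).sum_degree_le_two_mul_card_biUnion_incidenceFinset S
  obtain ⟨F, hFT, hF⟩ :=
    exists_subset_card_eq (Nat.ceil_le.2 (by linarith) : ⌈#S * x / 2⌉₊ ≤ #T)
  refine ⟨F, hFT.trans (biUnion_mono fun u _ e he => ?_), hF, fun e he => ?_⟩
  · rw [SimpleGraph.mem_incidenceFinset] at he ⊢
    exact ⟨SimpleGraph.edgeSet_mono (randCube_le n ω) he.1, he.2⟩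
  · obtain ⟨u, -, heu⟩ := mem_biUnion.1 (hFT he)
    exact apply_eq_true_of_mem_edgeSet_randCube ((SimpleGraph.mem_incidenceFinset _ _ _).1 heu).1

open Classical in
theorem HasClusteredHighDegree.exists_present_edges {n : ℕ} {a b : ℝ}
    {ω : Sym2 (Fin n → Bool) → Bool} (h : HasClusteredHighDegree n a b ω) :
    ∃ v, ∃ S ∈ (distOneOrTwo v).powersetCard ⌈(n : ℝ) ^ a⌉₊,
      ∃ F ⊆ S.biUnion (fun u => (cubeGraph n).incidenceFinset u),
        #F = ⌈⌈(n : ℝ) ^ a⌉₊ * (n : ℝ) ^ b / 2⌉₊ ∧ ∀ e ∈ F, ω e = true := by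
  obtain ⟨v, hv⟩ := h
  set U : Finset (Fin n → Bool) := {u | (hammingDist u v = 1 ∨ hammingDist u v = 2) ∧
    (n : ℝ) ^ b ≤ (deg (randCube n ω) u : ℝ)}
  rw [Set.ncard_eq_toFinset_card', Set.toFinset_ofPred] at hv
  obtain ⟨S, hSU, hS⟩ :=
    exists_subset_card_eq (Nat.ceil_le.2 hv : ⌈(n : ℝ) ^ a⌉₊ ≤ #U)
  have hSU' : ∀ u ∈ S, _ := fun u hu => (mem_filter.1 (hSU hu)).2
  refine ⟨v, S, mem_powersetCard.2 ⟨fun u hu => ?_, hS⟩,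
    hS ▸ exists_present_edges_of_le_deg ω S fun u hu => (hSU' u hu).2⟩
  simpa [distOneOrTwo] using (hSU' u hu).1

instance inst_s5 (n : ℕ) (p : ℝ) : IsProbabilityMeasure (cubeMeasure n p) := by
  unfold cubeMeasure; infer_instance

theorem cubeMeasure_forall_true_le (n : ℕ) (p : ℝ) (F : Finset (Sym2 (Fin n → Bool))) :
    cubeMeasure n p {ω | ∀ e ∈ F, ω e = true} ≤ ENNReal.ofReal p ^ #F := by
  change cubeMeasure n p ((F : Set _).pi fun _ => {true}) ≤ _
  rw [cubeMeasure, Measure.pi_pi_finset, prod_const]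
  gcongr
  rw [PMF.toMeasure_apply_singleton _ _ (measurableSet_singleton _)]
  exact ENNReal.coe_le_coe.2 (min_le_left _ _)

theorem cubeMeasure_exists_forall_true_le (n : ℕ) (p : ℝ) (E : Finset (Sym2 (Fin n → Bool)))
    (f : ℕ) :
    cubeMeasure n p {ω | ∃ F ⊆ E, #F = f ∧ ∀ e ∈ F, ω e = true} ≤
      (#E).choose f * ENNReal.ofReal p ^ f := by
  calc cubeMeasure n p {ω | ∃ F ⊆ E, #F = f ∧ ∀ e ∈ F, ω e = true}
      = cubeMeasure n p (⋃ F ∈ E.powersetCard f, {ω | ∀ e ∈ F, ω e = true}) := by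
        congr 1; ext ω; simp [and_assoc]
    _ ≤ ∑ F ∈ E.powersetCard f, cubeMeasure n p {ω | ∀ e ∈ F, ω e = true} :=
        measure_biUnion_finset_le _ _
    _ ≤ ∑ _F ∈ E.powersetCard f, ENNReal.ofReal p ^ f := sum_le_sum fun F hF =>
        (mem_powersetCard.1 hF).2 ▸ cubeMeasure_forall_true_le n p F
    _ = (#E).choose f * ENNReal.ofReal p ^ f := by rw [sum_const, card_powersetCard, nsmul_eq_mul]

open Classical in
theorem cubeMeasure_exists_present_edges_near_le (n : ℕ) (p : ℝ) (m f : ℕ) :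
    cubeMeasure n p {ω | ∃ v, ∃ S ∈ (distOneOrTwo v).powersetCard m,
      ∃ F ⊆ S.biUnion (fun u => (cubeGraph n).incidenceFinset u), #F = f ∧
        ∀ e ∈ F, ω e = true} ≤
      2 ^ n * (n ^ 2).choose m * (m * n).choose f * ENNReal.ofReal p ^ f := by
  have hnear : ∀ v, ∀ S ∈ (distOneOrTwo v).powersetCard m,
      cubeMeasure n p {ω | ∃ F ⊆ S.biUnion (fun u => (cubeGraph n).incidenceFinset u),
        #F = f ∧ ∀ e ∈ F, ω e = true} ≤ (m * n).choose f * ENNReal.ofReal p ^ f := by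
    intro v S hS
    refine (cubeMeasure_exists_forall_true_le n p _ f).trans ?_
    gcongr
    rw [← (mem_powersetCard.1 hS).2]
    exact card_biUnion_le_card_mul _ _ _ fun u _ =>
      ((cubeGraph n).card_incidenceFinset_eq_degree u).trans_le (cubeGraph_degree_le n u)
  calc _ = cubeMeasure n p (⋃ v, ⋃ S ∈ (distOneOrTwo v).powersetCard m,
          {ω | ∃ F ⊆ S.biUnion (fun u => (cubeGraph n).incidenceFinset u), #F = f ∧
            ∀ e ∈ F, ω e = true}) := by
        congr 1; ext ω; simp
    _ ≤ ∑ v, ∑ S ∈ (distOneOrTwo v).powersetCard m, cubeMeasure n p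
          {ω | ∃ F ⊆ S.biUnion (fun u => (cubeGraph n).incidenceFinset u), #F = f ∧
            ∀ e ∈ F, ω e = true} :=
        (measure_iUnion_fintype_le _ _).trans (sum_le_sum fun v _ => measure_biUnion_finset_le _ _)
    _ ≤ ∑ v : Fin n → Bool, ∑ _S ∈ (distOneOrTwo v).powersetCard m,
          (m * n).choose f * ENNReal.ofReal p ^ f :=
        sum_le_sum fun v _ => sum_le_sum (hnear v)
    _ ≤ ∑ _v : Fin n → Bool,
          (n ^ 2).choose m * ((m * n).choose f * ENNReal.ofReal p ^ f) := by
        refine sum_le_sum fun v _ => ?_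
        rw [sum_const, card_powersetCard, nsmul_eq_mul]
        gcongr
        exact card_distOneOrTwo_le v
    _ = 2 ^ n * (n ^ 2).choose m * (m * n).choose f * ENNReal.ofReal p ^ f := by
        simp [sum_const, mul_assoc]

section Estimates

open Real

theorem Nat.choose_mul_pow_le_exp_one_div_pow {N f : ℕ} {q c : ℝ} (hq : 0 ≤ q) (hc : 0 < c)
    (h : c * (N * q) ≤ f) : N.choose f * q ^ f ≤ (exp 1 / c) ^ f := by
  calc N.choose f * q ^ f ≤ N ^ f / f.factorial * q ^ f := by
        gcongr; exact Nat.choose_le_pow_div f N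
    _ = (N * q) ^ f / f.factorial := by ring
    _ ≤ (f / c) ^ f / f.factorial := by gcongr; rwa [le_div_iff₀' hc]
    _ = (f ^ f / f.factorial) / c ^ f := by ring
    _ ≤ exp f / c ^ f := by gcongr; exact Real.pow_div_factorial_le_exp _ (Nat.cast_nonneg f) f
    _ = (exp 1 / c) ^ f := by rw [div_pow, ← exp_nat_mul, mul_one]

theorem pow_eq_exp_mul_log {y : ℝ} (hy : 0 < y) (k : ℕ) : y ^ k = exp (k * log y) := by
  rw [exp_nat_mul, exp_log hy]

theorem isLittleO_linear_add_rpow_mul_log {a b : ℝ} (hb : 0 < b) (hab : 1 < a + b) (C : ℝ) :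
    (fun x : ℝ => x * C + 2 * (x ^ a + 1) * log x) =o[atTop] fun x => x ^ (a + b) := by
  have hsplit : ∀ᶠ x : ℝ in atTop,
      x * x ^ (a + b - 1) = x ^ (a + b) ∧ x ^ a * x ^ b = x ^ (a + b) := by
    filter_upwards [eventually_gt_atTop 0] with x hx
    refine ⟨?_, (rpow_add hx a b).symm⟩
    conv_lhs => arg 1; rw [← rpow_one x]
    rw [← rpow_add hx]; ring_nf
  have hlin : (fun x : ℝ => x * C) =o[atTop] fun x => x ^ (a + b) :=
    ((isBigO_refl (fun x : ℝ => x) atTop).mul_isLittleO (isLittleO_const_left.2 <| Or.inr <|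
      tendsto_norm_atTop_atTop.comp (tendsto_rpow_atTop (by linarith)))).congr' .rfl
      (hsplit.mono fun _ hx => hx.1)
  have hmul : (fun x : ℝ => x ^ a * log x) =o[atTop] fun x => x ^ (a + b) :=
    ((isBigO_refl (fun x : ℝ => x ^ a) atTop).mul_isLittleO
      (isLittleO_log_rpow_atTop hb)).congr' .rfl (hsplit.mono fun _ hx => hx.2)
  have hlog : log =o[atTop] fun x : ℝ => x ^ (a + b) := isLittleO_log_rpow_atTop (by linarith)
  exact (hlin.add ((hmul.add hlog).const_mul_left 2)).congr_left fun x => by ring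

theorem tendsto_linear_add_rpow_mul_log_add_neg_mul_rpow_atBot {a b : ℝ} (hb : 0 < b)
    (hab : 1 < a + b) (C : ℝ) {L : ℝ} (hL : L < 0) :
    Tendsto (fun x : ℝ => x * C + 2 * (x ^ a + 1) * log x + L * x ^ (a + b)) atTop atBot := by
  have hequiv : (fun x : ℝ => L * x ^ (a + b)) ~[atTop]
      fun x => L * x ^ (a + b) + (x * C + 2 * (x ^ a + 1) * log x) :=
    (IsEquivalent.refl.add_isLittleO
      ((isLittleO_linear_add_rpow_mul_log hb hab C).const_mul_right hL.ne)).symm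
  refine (hequiv.tendsto_atBot ?_).congr fun x => by ring
  exact (tendsto_rpow_atTop (by linarith)).const_mul_atTop_of_neg hL

theorem two_pow_mul_choose_mul_choose_mul_pow_le_exp {n m f : ℕ} (hn : 1 ≤ n) {a b q : ℝ}
    (hq : 0 ≤ q) (hm : (m : ℝ) ≤ (n : ℝ) ^ a + 1) (hf : (n : ℝ) ^ (a + b) / 2 ≤ f)
    (hmnq : 3 * (m * n * q) ≤ f) :
    (2 : ℝ) ^ n * (n ^ 2).choose m * ((m * n).choose f * q ^ f) ≤ exp (n * log 2 +
      2 * ((n : ℝ) ^ a + 1) * log n + log (exp 1 / 3) / 2 * (n : ℝ) ^ (a + b)) := by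
  have hbinom : ((m * n).choose f : ℝ) * q ^ f ≤ (exp 1 / 3) ^ f :=
    Nat.choose_mul_pow_le_exp_one_div_pow hq three_pos (by push_cast; linarith)
  have hlog_m : (m : ℝ) * log ((n : ℝ) ^ 2) ≤ 2 * ((n : ℝ) ^ a + 1) * log n := by
    rw [log_pow]
    push_cast
    nlinarith [log_nonneg (Nat.one_le_cast.2 hn : (1 : ℝ) ≤ n)]
  have hlog_f : (f : ℝ) * log (exp 1 / 3) ≤ log (exp 1 / 3) / 2 * (n : ℝ) ^ (a + b) := by
    have hL : log (exp 1 / 3) < 0 := log_neg (by positivity) (by linarith [exp_one_lt_d9])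
    nlinarith
  calc _ ≤ (2 : ℝ) ^ n * ((n : ℝ) ^ 2) ^ m * (exp 1 / 3) ^ f := by
        gcongr; exact_mod_cast Nat.choose_le_pow _ _
    _ = exp (n * log 2 + m * log ((n : ℝ) ^ 2) + f * log (exp 1 / 3)) := by
        have hx : (0 : ℝ) < n := by exact_mod_cast hn
        rw [exp_add, exp_add, ← pow_eq_exp_mul_log two_pos,
          ← pow_eq_exp_mul_log (by positivity), ← pow_eq_exp_mul_log (by positivity)]
    _ ≤ _ := exp_le_exp.2 (by linarith)

theorem cubeMeasure_hasClusteredHighDegree_le {n : ℕ} (hn : 1 ≤ n) {a b p : ℝ}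
    (hpb : 6 * (n : ℝ) * p ≤ (n : ℝ) ^ b) :
    cubeMeasure n p {ω | HasClusteredHighDegree n a b ω} ≤ ENNReal.ofReal (exp (n * log 2 +
      2 * ((n : ℝ) ^ a + 1) * log n + log (exp 1 / 3) / 2 * (n : ℝ) ^ (a + b))) := by
  classical
  set m := ⌈(n : ℝ) ^ a⌉₊
  set f := ⌈m * (n : ℝ) ^ b / 2⌉₊
  -- `p` enters `cubeMeasure` only through its positive part.
  obtain ⟨q, hq_def⟩ : ∃ q : NNReal, q = p.toNNReal := ⟨_, rfl⟩
  have hq : 6 * (n * (q : ℝ)) ≤ (n : ℝ) ^ b := by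
    rcases le_total p 0 with hp | hp
    · simp only [hq_def, Real.toNNReal_of_nonpos hp, NNReal.coe_zero, mul_zero]; positivity
    · rw [hq_def, Real.coe_toNNReal _ hp]; linarith
  have hm : (n : ℝ) ^ a ≤ m := Nat.le_ceil _
  have hf : (m : ℝ) * (n : ℝ) ^ b / 2 ≤ f := Nat.le_ceil _
  have hreal := two_pow_mul_choose_mul_choose_mul_pow_le_exp (m := m) (f := f) (b := b) hn
    q.coe_nonneg (Nat.ceil_lt_add_one (by positivity)).le
    (by rw [rpow_add (by exact_mod_cast hn)]; nlinarith [rpow_nonneg n.cast_nonneg b])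
    (by nlinarith [m.cast_nonneg (α := ℝ)])
  calc _ ≤ cubeMeasure n p {ω | ∃ v, ∃ S ∈ (distOneOrTwo v).powersetCard m,
          ∃ F ⊆ S.biUnion (fun u => (cubeGraph n).incidenceFinset u), #F = f ∧
            ∀ e ∈ F, ω e = true} := measure_mono fun ω h => h.exists_present_edges
    _ ≤ 2 ^ n * (n ^ 2).choose m * (m * n).choose f * ENNReal.ofReal p ^ f :=
        cubeMeasure_exists_present_edges_near_le n p m f
    _ = ENNReal.ofReal ((2 : ℝ) ^ n * (n ^ 2).choose m * ((m * n).choose f * (q : ℝ) ^ f)) := by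
        rw [ENNReal.ofReal_mul (by positivity), ENNReal.ofReal_mul (by positivity),
          ENNReal.ofReal_mul (by positivity), ENNReal.ofReal_pow q.coe_nonneg,
          ENNReal.ofReal_pow two_pos.le, ENNReal.ofReal_natCast, ENNReal.ofReal_natCast,
          ENNReal.ofReal_ofNat, ENNReal.ofReal_coe_nnreal, hq_def, mul_assoc]
        rfl
    _ ≤ _ := ENNReal.ofReal_le_ofReal hreal

theorem tendsto_cubeMeasure_hasClusteredHighDegree_zero {a b : ℝ} (hb : 0 < b) (hab : 1 < a + b)
    {p : ℕ → ℝ} (hpb : ∀ n : ℕ, 6 * (n : ℝ) * p n ≤ (n : ℝ) ^ b) :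
    Tendsto (fun n => cubeMeasure n (p n) {ω | HasClusteredHighDegree n a b ω}) atTop
      (nhds 0) := by
  have hL : log (exp 1 / 3) / 2 < 0 := by
    have := log_neg (by positivity : 0 < exp 1 / 3) (by linarith [exp_one_lt_d9])
    linarith
  have hexp := ENNReal.tendsto_ofReal <| tendsto_exp_atBot.comp <|
    (tendsto_linear_add_rpow_mul_log_add_neg_mul_rpow_atBot hb hab (log 2) hL).comp
      tendsto_natCast_atTop_atTop
  rw [ENNReal.ofReal_zero] at hexp
  exact tendsto_of_tendsto_of_tendsto_of_le_of_le' tendsto_const_nhds hexp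
    (.of_forall fun _ => zero_le)
    ((eventually_ge_atTop 1).mono fun n hn => cubeMeasure_hasClusteredHighDegree_le hn (hpb n))

end Estimates

theorem no_clustered_high_degree_general (a b : ℝ) (hb : 0 < b) (hab : 1 < a + b)
    (p : ℕ → ℝ)
    (hpb : ∀ n : ℕ, 6 * (n : ℝ) * p n ≤ (n : ℝ) ^ b) :
    Tendsto (fun n : ℕ =>
      cubeMeasure n (p n) {ω |
        ¬ ∃ v : Fin n → Bool, (n : ℝ) ^ a ≤
          (({u | (hammingDist u v = 1 ∨ hammingDist u v = 2) ∧
              (n : ℝ) ^ b ≤ (deg (randCube n ω) u : ℝ)}.ncard : ℕ) : ℝ)})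
      atTop (nhds 1) := by
  have hcompl : ∀ n : ℕ, cubeMeasure n (p n) {ω | ¬ HasClusteredHighDegree n a b ω} =
      1 - cubeMeasure n (p n) {ω | HasClusteredHighDegree n a b ω} := fun n => by
    rw [← Set.compl_ofPred, prob_compl_eq_one_sub (Set.toFinite _).measurableSet]
  change Tendsto (fun n => cubeMeasure n (p n) {ω | ¬ HasClusteredHighDegree n a b ω}) atTop _
  simpa [hcompl] using ENNReal.Tendsto.sub (tendsto_const_nhds (x := 1))
    (tendsto_cubeMeasure_hasClusteredHighDegree_zero hb hab hpb) (.inr ENNReal.zero_ne_top)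

/-- for positive constants `a, b` with `a + b > 1` and `0 < p ≤ 1` with
`n^b ≥ 6np`, a.s. no vertex `v` has at least `n^a` vertices within (Hamming) distance
one or two whose degree in `G` is at least `n^b`. -/
theorem no_clustered_high_degree (a b : ℝ) (ha : 0 < a) (hb : 0 < b) (hab : 1 < a + b)
    (p : ℕ → ℝ) (hp : ∀ n, 0 < p n ∧ p n ≤ 1)
    (hpb : ∀ n : ℕ, 6 * (n : ℝ) * p n ≤ (n : ℝ) ^ b) :
    Tendsto (fun n : ℕ =>
      cubeMeasure n (p n) {ω |
        ¬ ∃ v : Fin n → Bool, (n : ℝ) ^ a ≤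
          (({u | (hammingDist u v = 1 ∨ hammingDist u v = 2) ∧
              (n : ℝ) ^ b ≤ (deg (randCube n ω) u : ℝ)}.ncard : ℕ) : ℝ)})
      atTop (nhds 1) :=
  no_clustered_high_degree_general a b hb hab p hpb
end
end
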